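/- Let (Ω, 𝓕, μ) be a probability space, n : ℕ, and x : Fin n → Ω → ℝ a family of random variables each in L²(μ). Let A₀ B₀ : Fin n → ℝ and A B : Fin n → Fin n → ℝ; define the drift a_p(ω) = A₀ p + ∑_{α} A p α * x α (ω) + (1/2) * ∑_{q} (B₀ q + ∑_{φ} B q φ * x φ (ω)) * B p q and the diffusion entry c_{ij}(ω) = (B₀ i + ∑_{φ} B i φ * x φ (ω)) * (B₀ j + ∑_{γ} B j γ * x γ (ω)); let m φ = ∫ x φ dμ and P φ γ = ∫ (x φ * x γ) dμ - m φ * m γ. Then for all i j : Fin n, ∫ (x i * a_j + x j * a_i + c_{ij}) dμ - m i * ∫ a_j dμ - m j * ∫ a_i dμ = ∑_{p} P i p * (A j p + (1/2) * ∑_{λ} B λ p * B j λ) + ∑_{p} P j p * (A i p + (1/2) * ∑_{λ} B λ p * B i λ) + B₀ i * B₀ j + ∑_{γ} B₀ i * B j γ * m γ + ∑_{φ} B₀ j * B i φ * m φ + ∑_{φ,γ} B i φ * B j γ * m φ * m γ + ∑_{p,q} B i p * B j q * P p q. (This identity is the probabilistic content of the conditional variance evolution, equation (8b) of Theorem 2: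 the left-hand side is the integrand of dP_{ij}/dt and the right-hand side is the stated closed form.) -/

import Mathlib

/-! The drift `a p` and the diffusion factor `b p = B₀ p + ∑ φ, B p φ * x φ` (so that
`c i j = b i * b j`) are affine functions of `x`. Hence the left-hand side equals
`cov(x i, a j) + cov(x j, a i) + E[b i] E[b j] + cov(b i, b j)`, and since covariance is
bilinear and blind to additive constants, each of these covariances expands into entries
of `P = cov(x, x)`. -/

open MeasureTheory ProbabilityTheory Finset

namespace VarianceEvolution

variable {Ω ι : Type*} [MeasurableSpace Ω] {μ : Measure Ω} [Fintype ι] {x : ι → Ω → ℝ}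

def affineComb (u₀ : ℝ) (u : ι → ℝ) (x : ι → Ω → ℝ) (ω : Ω) : ℝ :=
  u₀ + ∑ α, u α * x α ω

lemma memLp_affineComb [IsFiniteMeasure μ] (hx : ∀ α, MemLp (x α) 2 μ) (u₀ : ℝ) (u : ι → ℝ) :
    MemLp (affineComb u₀ u x) 2 μ :=
  (memLp_const u₀).add (memLp_finsetSum _ fun α _ => (hx α).const_mul (u α))

lemma integral_affineComb [IsProbabilityMeasure μ] (hx : ∀ α, Integrable (x α) μ)
    (u₀ : ℝ) (u : ι → ℝ) :
    ∫ ω, affineComb u₀ u x ω ∂μ = u₀ + ∑ α, u α * ∫ ω, x α ω ∂μ := by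
  have hsum : Integrable (fun ω => ∑ α, u α * x α ω) μ :=
    integrable_finsetSum _ fun α _ => (hx α).const_mul (u α)
  simp only [affineComb]
  rw [integral_add (integrable_const u₀) hsum,
    integral_finsetSum _ fun α _ => (hx α).const_mul (u α)]
  simp only [integral_const, probReal_univ, one_smul, integral_const_mul]

lemma covariance_affineComb_right [IsProbabilityMeasure μ] {Y : Ω → ℝ} (hY : MemLp Y 2 μ)
    (hx : ∀ α, MemLp (x α) 2 μ) (u₀ : ℝ) (u : ι → ℝ) :
    cov[Y, affineComb u₀ u x; μ] = ∑ α, cov[Y, x α; μ] * u α := by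
  have hux : ∀ α, MemLp (fun ω => u α * x α ω) 2 μ := fun α => (hx α).const_mul (u α)
  unfold affineComb
  rw [covariance_const_add_right ((memLp_finsetSum _ fun α _ => hux α).integrable one_le_two),
    covariance_fun_sum_right hux hY]
  simp only [covariance_const_mul_right]
  exact sum_congr rfl fun α _ => mul_comm _ _

lemma covariance_affineComb_affineComb [IsProbabilityMeasure μ] (hx : ∀ α, MemLp (x α) 2 μ)
    (u₀ v₀ : ℝ) (u v : ι → ℝ) :
    cov[affineComb u₀ u x, affineComb v₀ v x; μ] =
      ∑ φ, ∑ γ, u φ * v γ * cov[x φ, x γ; μ] := by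
  rw [covariance_affineComb_right (memLp_affineComb hx u₀ u) hx, sum_comm]
  refine sum_congr rfl fun γ _ => ?_
  rw [covariance_comm, covariance_affineComb_right (hx γ) hx, sum_mul]
  refine sum_congr rfl fun φ _ => ?_
  rw [covariance_comm]
  ring

lemma sum_affine_mul (B₀ w : ι → ℝ) (B : ι → ι → ℝ) (y : ι → ℝ) :
    ∑ q, (B₀ q + ∑ φ, B q φ * y φ) * w q =
      ∑ q, B₀ q * w q + ∑ φ, (∑ q, B q φ * w q) * y φ := by
  simp only [add_mul, sum_add_distrib, sum_mul]
  rw [sum_comm (f := fun q φ => B q φ * y φ * w q)]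
  congr 1
  exact sum_congr rfl fun φ _ => sum_congr rfl fun q _ => by ring

lemma add_sum_mul_add_sum (a₀ b₀ : ℝ) (u v y : ι → ℝ) :
    (a₀ + ∑ φ, u φ * y φ) * (b₀ + ∑ γ, v γ * y γ) =
      a₀ * b₀ + ∑ γ, a₀ * v γ * y γ + ∑ φ, b₀ * u φ * y φ + ∑ φ, ∑ γ, u φ * v γ * y φ * y γ := by
  have h_left : a₀ * ∑ γ, v γ * y γ = ∑ γ, a₀ * v γ * y γ := by
    simp only [mul_sum, mul_assoc]
  have h_right : (∑ φ, u φ * y φ) * b₀ = ∑ φ, b₀ * u φ * y φ := by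
    rw [sum_mul]
    exact sum_congr rfl fun _ _ => by ring
  have h_both : (∑ φ, u φ * y φ) * ∑ γ, v γ * y γ = ∑ φ, ∑ γ, u φ * v γ * y φ * y γ := by
    rw [sum_mul_sum]
    exact sum_congr rfl fun _ _ => sum_congr rfl fun _ _ => by ring
  rw [add_mul, mul_add, mul_add, h_left, h_right, h_both]
  ring

lemma integral_mul_eq_covariance_add [IsProbabilityMeasure μ] {X Y : Ω → ℝ}
    (hX : MemLp X 2 μ) (hY : MemLp Y 2 μ) :
    ∫ ω, X ω * Y ω ∂μ = cov[X, Y; μ] + (∫ ω, X ω ∂μ) * ∫ ω, Y ω ∂μ := by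
  rw [covariance_eq_sub hX hY]
  simp only [Pi.mul_apply, sub_add_cancel]

end VarianceEvolution

open VarianceEvolution

/-- Equation (8b) of Theorem 2 (probabilistic content): the integrand of dP_{ij}/dt
equals the stated closed form. -/
theorem variance_evolution_identity {Ω : Type*} [MeasurableSpace Ω]
    (μ : Measure Ω) [IsProbabilityMeasure μ] (n : ℕ) (x : Fin n → Ω → ℝ)
    (hx : ∀ φ, MemLp (x φ) 2 μ)
    (A₀ B₀ : Fin n → ℝ) (A B : Fin n → Fin n → ℝ)
    (a : Fin n → Ω → ℝ)
    (ha : ∀ p ω, a p ω = A₀ p + (∑ α, A p α * x α ω) +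
      (1/2) * ∑ q, (B₀ q + ∑ φ, B q φ * x φ ω) * B p q)
    (c : Fin n → Fin n → Ω → ℝ)
    (hc : ∀ p q ω, c p q ω = (B₀ p + ∑ φ, B p φ * x φ ω) * (B₀ q + ∑ γ, B q γ * x γ ω))
    (m : Fin n → ℝ) (hm : ∀ φ, m φ = ∫ ω, x φ ω ∂μ)
    (P : Fin n → Fin n → ℝ)
    (hP : ∀ φ γ, P φ γ = (∫ ω, x φ ω * x γ ω ∂μ) - m φ * m γ)
    (i j : Fin n) :
    (∫ ω, (x i ω * a j ω + x j ω * a i ω + c i j ω) ∂μ) -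
        m i * (∫ ω, a j ω ∂μ) - m j * (∫ ω, a i ω ∂μ) =
      (∑ p, P i p * (A j p + (1/2) * ∑ lam, B lam p * B j lam)) +
        (∑ p, P j p * (A i p + (1/2) * ∑ lam, B lam p * B i lam)) +
        B₀ i * B₀ j + (∑ γ, B₀ i * B j γ * m γ) + (∑ φ, B₀ j * B i φ * m φ) +
        (∑ φ, ∑ γ, B i φ * B j γ * m φ * m γ) +
        ∑ p, ∑ q, B i p * B j q * P p q := by
  set b : Fin n → Ω → ℝ := fun p => affineComb (B₀ p) (B p) x
  have ha_affine : ∀ p, a p = affineComb (A₀ p + 1/2 * ∑ q, B₀ q * B p q)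
      (fun α => A p α + 1/2 * ∑ q, B q α * B p q) x := fun p => funext fun ω => by
    rw [ha, sum_affine_mul]
    simp only [affineComb, add_mul, sum_add_distrib, mul_add, mul_sum, sum_mul, mul_assoc]
    ring
  have ha2 : ∀ p, MemLp (a p) 2 μ := fun p => ha_affine p ▸ memLp_affineComb hx _ _
  have hb2 : ∀ p, MemLp (b p) 2 μ := fun p => memLp_affineComb hx _ _
  have hcov : ∀ φ γ, cov[x φ, x γ; μ] = P φ γ := fun φ γ => by
    rw [hP, hm, hm, integral_mul_eq_covariance_add (hx φ) (hx γ), add_sub_cancel_right]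
  have hmean_b : ∀ p, ∫ ω, b p ω ∂μ = B₀ p + ∑ φ, B p φ * m φ := fun p => by
    simp only [b, integral_affineComb (fun φ => (hx φ).integrable one_le_two), hm]
  have hc_b : c i j = fun ω => b i ω * b j ω := funext (hc i j)
  have hxa : ∀ k p, Integrable (fun ω => x k ω * a p ω) μ :=
    fun k p => (hx k).integrable_mul (ha2 p)
  have hxa_sum : Integrable (fun ω => x i ω * a j ω + x j ω * a i ω) μ := (hxa i j).add (hxa j i)
  have hc_int : Integrable (c i j) μ := hc_b ▸ (hb2 i).integrable_mul (hb2 j)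
  rw [integral_add hxa_sum hc_int, integral_add (hxa i j) (hxa j i),
    integral_mul_eq_covariance_add (hx i) (ha2 j), integral_mul_eq_covariance_add (hx j) (ha2 i),
    hc_b, integral_mul_eq_covariance_add (hb2 i) (hb2 j), hmean_b, hmean_b, ← hm, ← hm,
    ha_affine i, ha_affine j, covariance_affineComb_right (hx i) hx,
    covariance_affineComb_right (hx j) hx, covariance_affineComb_affineComb hx]
  simp only [hcov]
  rw [add_sum_mul_add_sum]
  ring
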